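/- Let x be a decision node and i a buyer with f_i(x) > 0 and κ_i(x) < t. Then p_i(x) ≤ v_{−i}(t − κ_i(x + e_i) | x), and equality holds only if μ̄_i(κ_i(x+e_i) + 1 | x) = μ_i(x). -/

import Mathlib

open Finset

noncomputable section

/-- The opponent of buyer `i`. -/
def other (i : Fin 2) : Fin 2 := 1 - i

/-- The standard unit vector of buyer `i`: winning one item moves `x` to `x + e i`. -/
def e (i : Fin 2) : Fin 2 → ℕ := Pi.single i 1

/-- Remaining supply `t(x) = T - x₁ - x₂` at node `x`. -/
def supply (T : ℕ) (x : Fin 2 → ℕ) : ℕ := T - (x 0 + x 1)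

/-- `x` is a decision node: `x₁ + x₂ < T`. -/
def IsDecision (T : ℕ) (x : Fin 2 → ℕ) : Prop := x 0 + x 1 < T

/-- Incremental value `v_i(k|x) = v_i(x_i + k)`. -/
def val (v : Fin 2 → ℕ → ℝ) (i : Fin 2) (k : ℕ) (x : Fin 2 → ℕ) : ℝ := v i (x i + k)

/-- Valuations are nonnegative and weakly decreasing. -/
def Admissible (v : Fin 2 → ℕ → ℝ) : Prop := ∀ i k, 0 ≤ v i k ∧ v i (k + 1) ≤ v i k

/-- Greedy payoff `μ̄_i(k|x) = Σ_{j=1}^k v_i(j|x) - k · v_{-i}(t-k+1|x)`. -/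
def gbar (T : ℕ) (v : Fin 2 → ℕ → ℝ) (i : Fin 2) (k : ℕ) (x : Fin 2 → ℕ) : ℝ :=
  (∑ j ∈ Finset.Icc 1 k, val v i j x) - (k : ℝ) * val v (other i) (supply T x - k + 1) x

/-- Greedy utility `μ_i(x) = max_{0 ≤ k ≤ t} μ̄_i(k|x)` (equal to `0` at terminal nodes). -/
def gu (T : ℕ) (v : Fin 2 → ℕ → ℝ) (i : Fin 2) (x : Fin 2 → ℕ) : ℝ :=
  Finset.sup' (Finset.range (supply T x + 1)) Finset.nonempty_range_add_one
    (fun k => gbar T v i k x)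

/-- Greedy demand `κ_i(x)`: the least `k ∈ {0,…,t}` attaining the greedy utility. -/
def gd (T : ℕ) (v : Fin 2 → ℕ → ℝ) (i : Fin 2) (x : Fin 2 → ℕ) : ℕ :=
  sInf {k | k ≤ supply T x ∧ gbar T v i k x = gu T v i x}

/-- Duopsony factor `f_i(x) = max ({k ∈ {1,…,t} : v_i(k|x) > v_{-i}(t-k+1|x)} ∪ {0})`. -/
def df (T : ℕ) (v : Fin 2 → ℕ → ℝ) (i : Fin 2) (x : Fin 2 → ℕ) : ℕ :=
  sSup {k | 1 ≤ k ∧ k ≤ supply T x ∧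
    val v (other i) (supply T x - k + 1) x < val v i k x}

/-- Baseline price `β_i(x)`. -/
def base (T : ℕ) (v : Fin 2 → ℕ → ℝ) (i : Fin 2) (x : Fin 2 → ℕ) : ℝ :=
  if df T v i x = 0 then val v i 1 x
  else val v (other i) (supply T x - gd T v i x + 1) x

/-- Threshold price `p_i(x) = v_i(1|x) + μ_i(x+e_i) - μ_i(x+e_{-i})`. -/
def tp (T : ℕ) (v : Fin 2 → ℕ → ℝ) (i : Fin 2) (x : Fin 2 → ℕ) : ℝ :=
  val v i 1 x + gu T v i (x + e i) - gu T v i (x + e (other i))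

/-!
If the opponent wins an item, buyer `i`'s greedy payoffs `μ̄_i(k|·)` for `k ≤ t - 1` are unchanged
(the opponent's price `v_{-i}(t-k+1|·)` reads the same entry of `v_{-i}`), and `κ_i(x) < t` puts a
maximiser among them, so `μ_i(x + e_{-i}) = μ_i(x)`. If `i` wins an item, shifting the sum gives
`v_i(1|x) + μ̄_i(k|x + e_i) = μ̄_i(k+1|x) + v_{-i}(t-k|x)`. With `κ = κ_i(x + e_i)` this yields
`p_i(x) = v_{-i}(t-κ|x) - (μ_i(x) - μ̄_i(κ+1|x))`, and the bracket is nonnegative.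
-/

lemma other_ne_self (i : Fin 2) : other i ≠ i := by fin_cases i <;> decide

lemma add_e_apply_self (x : Fin 2 → ℕ) (i : Fin 2) : (x + e i) i = x i + 1 := by
  simp [e]

lemma add_e_apply_of_ne (x : Fin 2 → ℕ) {i j : Fin 2} (h : j ≠ i) : (x + e i) j = x j := by
  simp [e, h]

lemma supply_add_e (T : ℕ) (x : Fin 2 → ℕ) (i : Fin 2) :
    supply T (x + e i) = supply T x - 1 := by
  fin_cases i <;> simp [supply, e] <;> omega

lemma sum_Icc_one_succ (f : ℕ → ℝ) (k : ℕ) :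
    ∑ j ∈ Icc 1 (k + 1), f j = f 1 + ∑ j ∈ Icc 1 k, f (j + 1) := by
  rw [← insert_Icc_add_one_left_eq_Icc (by omega : 1 ≤ k + 1), sum_insert (by simp),
    ← map_add_right_Icc 1 k 1, sum_map]
  rfl

section GreedyPayoff

variable (T : ℕ) (v : Fin 2 → ℕ → ℝ) (i : Fin 2) {x : Fin 2 → ℕ}

lemma gbar_add_e_other {k : ℕ} (ht : 1 ≤ supply T x) (hk : k ≤ supply T x - 1) :
    gbar T v i k (x + e (other i)) = gbar T v i k x := by
  unfold gbar _root_.val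
  rw [supply_add_e, add_e_apply_self, add_e_apply_of_ne x (other_ne_self i).symm,
    show x (other i) + 1 + (supply T x - 1 - k + 1) = x (other i) + (supply T x - k + 1) by
      omega]

lemma val_one_add_gbar_add_e_self {k : ℕ} (ht : 1 ≤ supply T x) (hk : k ≤ supply T x - 1) :
    val v i 1 x + gbar T v i k (x + e i)
      = gbar T v i (k + 1) x + val v (other i) (supply T x - k) x := by
  unfold gbar _root_.val
  rw [supply_add_e, add_e_apply_self, add_e_apply_of_ne x (other_ne_self i),
    sum_Icc_one_succ (fun j => v i (x i + j)),
    show supply T x - 1 - k + 1 = supply T x - k by omega,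
    show supply T x - (k + 1) + 1 = supply T x - k by omega]
  simp only [add_assoc, add_comm 1]
  push_cast
  ring

lemma gbar_le_gu {k : ℕ} (hk : k ≤ supply T x) : gbar T v i k x ≤ gu T v i x :=
  le_sup' (fun k => gbar T v i k x) (mem_range.mpr (by omega))

lemma gd_spec : gd T v i x ≤ supply T x ∧ gbar T v i (gd T v i x) x = gu T v i x := by
  obtain ⟨k, hk, hmax⟩ :=
    exists_mem_eq_sup' (nonempty_range_add_one (n := supply T x)) (fun k => gbar T v i k x)
  apply Nat.sInf_mem (s := {k | k ≤ supply T x ∧ gbar T v i k x = gu T v i x})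
  exact ⟨k, Nat.lt_succ_iff.mp (mem_range.mp hk), hmax.symm⟩

lemma gu_add_e_other (ht : 1 ≤ supply T x) (hgd : gd T v i x < supply T x) :
    gu T v i (x + e (other i)) = gu T v i x := by
  apply le_antisymm
  · refine sup'_le _ _ fun k hk => ?_
    have hk' : k ≤ supply T x - 1 := by
      rw [supply_add_e, mem_range] at hk; omega
    rw [gbar_add_e_other T v i ht hk']
    exact gbar_le_gu T v i (by omega)
  · obtain ⟨-, hmax⟩ := gd_spec T v i (x := x)
    rw [← hmax, ← gbar_add_e_other T v i ht (by omega)]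
    exact gbar_le_gu T v i (by rw [supply_add_e]; omega)

lemma tp_eq_val_other_sub (ht : 1 ≤ supply T x) (hgd : gd T v i x < supply T x) :
    tp T v i x = val v (other i) (supply T x - gd T v i (x + e i)) x
      - (gu T v i x - gbar T v i (gd T v i (x + e i) + 1) x) := by
  obtain ⟨hκ, hmax⟩ := gd_spec T v i (x := x + e i)
  rw [supply_add_e] at hκ
  have hshift := val_one_add_gbar_add_e_self T v i ht hκ
  rw [hmax] at hshift
  unfold tp
  rw [gu_add_e_other T v i ht hgd]
  linarith

end GreedyPayoff

theorem stmt9_general (T : ℕ) (v : Fin 2 → ℕ → ℝ)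
    (x : Fin 2 → ℕ) (hx : IsDecision T x) (i : Fin 2)
    (hk : gd T v i x < supply T x) :
    tp T v i x ≤ val v (other i) (supply T x - gd T v i (x + e i)) x ∧
    (tp T v i x = val v (other i) (supply T x - gd T v i (x + e i)) x →
      gbar T v i (gd T v i (x + e i) + 1) x = gu T v i x) := by
  have ht : 1 ≤ supply T x := Nat.sub_pos_of_lt hx
  have hκ : gd T v i (x + e i) + 1 ≤ supply T x := by
    have := (gd_spec T v i (x := x + e i)).1
    rw [supply_add_e] at this; omega
  have hle := gbar_le_gu T v i hκ
  rw [tp_eq_val_other_sub T v i ht hk]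
  exact ⟨by linarith, fun h => by linarith⟩

/-- The threshold price never exceeds the opponent's top remaining marginal value. -/
theorem stmt9 (T : ℕ) (v : Fin 2 → ℕ → ℝ) (hv : Admissible v)
    (x : Fin 2 → ℕ) (hx : IsDecision T x) (i : Fin 2)
    (hf : 0 < df T v i x) (hk : gd T v i x < supply T x) :
    tp T v i x ≤ val v (other i) (supply T x - gd T v i (x + e i)) x ∧
    (tp T v i x = val v (other i) (supply T x - gd T v i (x + e i)) x →
      gbar T v i (gd T v i (x + e i) + 1) x = gu T v i x) :=
  stmt9_general T v x hx i hk
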